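/- arXiv:1505.05544 — 2 statements merged into one kernel-verified Lean document; each statement's English description precedes it below -/
import Mathlib

section
/- Let Q ≥ 2 be an integer and σ > 0, and define u : ℝ^Q → ℝ by u(x) = (1+|x|²)^{σ/2}. Then there exists a constant C > 0, depending only on σ and Q, such that for every x ∈ ℝ^Q, div(∇u/√(1+|∇u|²))(x) ≥ C (1+|x|)^{σ−2} / √(1+|∇u(x)|²). -/
/-!
Both `u` and the field `∇u / √(1 + |∇u|²)` are radial. For a field `x ↦ ψ(|x|²) x` the
divergence is `Q ψ + 2 |x|² ψ'`, and with `∇u = φ(|x|²) x`, `W = √(1 + |x|² φ²)` this becomes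
`((Q - 1) φ + (φ + 2 |x|² φ') / W²) / W`. For `φ(t) = σ (1 + t)^{σ/2 - 1}` (`gradProfile σ`)
the numerator `φ + 2tφ'` is at least `min (σ - 1) 0 · φ`, so, as `W ≥ 1` and `Q ≥ 2`, the
bracket is at least `min σ 1 · φ`; finally `φ(r²) ≍ (1 + r)^{σ - 2}` since
`(1 + r)² / 2 ≤ 1 + r² ≤ (1 + r)²`.
-/

open Set Filter Classical

noncomputable section

/-- The divergence of a vector field `V` on `ℝ^Q`: the sum of the partial derivatives
`∂ᵢ Vᵢ`. -/
def divg {Q : ℕ} (V : EuclideanSpace ℝ (Fin Q) → EuclideanSpace ℝ (Fin Q))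
    (x : EuclideanSpace ℝ (Fin Q)) : ℝ :=
  ∑ i, fderiv ℝ V x (EuclideanSpace.single i 1) i

theorem norm_smul_sq {E : Type*} [NormedAddCommGroup E] [NormedSpace ℝ E] (a : ℝ) (y : E) :
    ‖a • y‖ ^ 2 = ‖y‖ ^ 2 * a ^ 2 := by
  rw [norm_smul, Real.norm_eq_abs, mul_pow, sq_abs, mul_comm]

theorem hasDerivAt_one_add_rpow (p : ℝ) {t : ℝ} (ht : 1 + t ≠ 0) :
    HasDerivAt (fun s => (1 + s) ^ p) (p * (1 + t) ^ (p - 1)) t := by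
  convert ((hasDerivAt_id' t).const_add 1).rpow_const (p := p) (Or.inl ht) using 1
  ring

theorem hasGradientAt_comp_norm_sq {E : Type*} [NormedAddCommGroup E] [InnerProductSpace ℝ E]
    [CompleteSpace E] {F : ℝ → ℝ} {F' : ℝ} {x : E} (hF : HasDerivAt F F' (‖x‖ ^ 2)) :
    HasGradientAt (fun y => F (‖y‖ ^ 2)) ((2 * F') • x) x := by
  rw [hasGradientAt_iff_hasFDerivAt]
  refine (hF.comp_hasFDerivAt x (hasStrictFDerivAt_norm_sq x).hasFDerivAt).congr_fderiv ?_
  ext y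
  simp only [smul_apply, coe_innerSL_apply, nsmul_eq_mul, Nat.cast_ofNat,
    smul_eq_mul, map_smul, InnerProductSpace.toDual_apply_apply]
  ring

theorem divg_smul_id {Q : ℕ} {f : EuclideanSpace ℝ (Fin Q) → ℝ}
    {f' : EuclideanSpace ℝ (Fin Q) →L[ℝ] ℝ} {x : EuclideanSpace ℝ (Fin Q)}
    (hf : HasFDerivAt f f' x) :
    divg (fun y => f y • y) x = Q * f x + f' x := by
  have hV : HasFDerivAt (fun y => f y • y)
      (f x • ContinuousLinearMap.id ℝ _ + f'.smulRight x) x :=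
    hf.smul (hasFDerivAt_id x)
  have hf'x : f' x = ∑ i, f' (EuclideanSpace.single i 1) * x i := by
    conv_lhs => rw [← (EuclideanSpace.basisFun (Fin Q) ℝ).sum_repr x]
    simp [mul_comm]
  rw [divg, hV.fderiv, hf'x]
  simp [Finset.sum_add_distrib]

theorem divg_smul_radial {Q : ℕ} {ψ : ℝ → ℝ} {D : ℝ} {x : EuclideanSpace ℝ (Fin Q)}
    (hψ : HasDerivAt ψ D (‖x‖ ^ 2)) :
    divg (fun y => ψ (‖y‖ ^ 2) • y) x = Q * ψ (‖x‖ ^ 2) + 2 * ‖x‖ ^ 2 * D := by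
  have hf := hψ.comp_hasFDerivAt x (hasStrictFDerivAt_norm_sq x).hasFDerivAt
  rw [divg_smul_id (f := fun y => ψ (‖y‖ ^ 2)) hf]
  simp only [smul_apply, coe_innerSL_apply, inner_self_eq_norm_sq_to_K,
    Real.ringHom_apply, nsmul_eq_mul, Nat.cast_ofNat, smul_eq_mul, add_right_inj]
  ring

theorem hasDerivAt_div_sqrt_one_add_mul_sq {φ : ℝ → ℝ} {φ' t : ℝ} (hφ : HasDerivAt φ φ' t)
    (ht : 0 ≤ t) :
    HasDerivAt (fun s => φ s / √(1 + s * φ s ^ 2))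
      ((2 * φ' - φ t ^ 3) / (2 * (1 + t * φ t ^ 2) * √(1 + t * φ t ^ 2))) t := by
  have hW : 0 < 1 + t * φ t ^ 2 := by positivity
  have hS : 0 < √(1 + t * φ t ^ 2) := Real.sqrt_pos.mpr hW
  have hsqrt : HasDerivAt (fun s => √(1 + s * φ s ^ 2))
      ((φ t ^ 2 + t * (2 * φ t * φ')) / (2 * √(1 + t * φ t ^ 2))) t := by
    convert (((hasDerivAt_id' t).fun_mul (hφ.fun_pow 2)).const_add 1).sqrt hW.ne' using 2
    push_cast; ring
  refine (hφ.div hsqrt hS.ne').congr_deriv ?_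
  have hSS : √(1 + t * φ t ^ 2) ^ 2 = 1 + t * φ t ^ 2 := Real.sq_sqrt hW.le
  field_simp
  rw [hSS]
  ring

theorem divg_inv_sqrt_smul_radial {Q : ℕ} {φ : ℝ → ℝ} {φ' : ℝ}
    {x : EuclideanSpace ℝ (Fin Q)} (hφ : HasDerivAt φ φ' (‖x‖ ^ 2)) :
    divg (fun y => (√(1 + ‖y‖ ^ 2 * φ (‖y‖ ^ 2) ^ 2))⁻¹ • φ (‖y‖ ^ 2) • y) x
      = ((Q - 1) * φ (‖x‖ ^ 2) + (φ (‖x‖ ^ 2) + 2 * ‖x‖ ^ 2 * φ')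
          / (1 + ‖x‖ ^ 2 * φ (‖x‖ ^ 2) ^ 2)) / √(1 + ‖x‖ ^ 2 * φ (‖x‖ ^ 2) ^ 2) := by
  have hfield : (fun y : EuclideanSpace ℝ (Fin Q) =>
      (√(1 + ‖y‖ ^ 2 * φ (‖y‖ ^ 2) ^ 2))⁻¹ • φ (‖y‖ ^ 2) • y)
      = fun y => (fun s => φ s / √(1 + s * φ s ^ 2)) (‖y‖ ^ 2) • y := by
    funext y
    rw [smul_smul, inv_mul_eq_div]
  rw [hfield, divg_smul_radial (hasDerivAt_div_sqrt_one_add_mul_sq hφ (sq_nonneg _))]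
  have hW : 0 < 1 + ‖x‖ ^ 2 * φ (‖x‖ ^ 2) ^ 2 := by positivity
  have hS : 0 < √(1 + ‖x‖ ^ 2 * φ (‖x‖ ^ 2) ^ 2) := Real.sqrt_pos.mpr hW
  field_simp
  ring

theorem min_one_two_rpow_mul_le (p : ℝ) {r : ℝ} (hr : 0 ≤ r) :
    min 1 (2 ^ (-p)) * (1 + r) ^ (2 * p) ≤ (1 + r ^ 2) ^ p := by
  have hsq : (1 + r) ^ (2 * p) = ((1 + r) ^ 2) ^ p := by
    rw [Real.rpow_mul (by positivity), Real.rpow_two]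
  have hlow : 1 + r ^ 2 ≤ (1 + r) ^ 2 := by nlinarith
  have hupp : (1 + r) ^ 2 ≤ 2 * (1 + r ^ 2) := by nlinarith [sq_nonneg (r - 1)]
  rw [hsq]
  rcases le_total p 0 with hp | hp
  · calc min 1 (2 ^ (-p)) * ((1 + r) ^ 2) ^ p ≤ 1 * ((1 + r) ^ 2) ^ p := by
          gcongr; exact min_le_left _ _
      _ ≤ (1 + r ^ 2) ^ p := by
          rw [one_mul]; exact Real.rpow_le_rpow_of_nonpos (by positivity) hlow hp
  · calc min 1 (2 ^ (-p)) * ((1 + r) ^ 2) ^ p ≤ 2 ^ (-p) * (2 * (1 + r ^ 2)) ^ p := by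
          gcongr; exact min_le_right _ _
      _ = (1 + r ^ 2) ^ p := by
          rw [Real.mul_rpow (by norm_num) (by positivity), ← mul_assoc,
            ← Real.rpow_add (by norm_num), neg_add_cancel, Real.rpow_zero, one_mul]

theorem mul_le_div_one_add {m a X s : ℝ} (hm : m ≤ 0) (ha : 0 ≤ a) (hX : m * a ≤ X)
    (hs : 0 ≤ s) : m * a ≤ X / (1 + s) := by
  rw [le_div_iff₀ (by positivity)]
  rcases le_total 0 X with h | h <;> nlinarith [mul_nonpos_of_nonpos_of_nonneg hm ha]

def gradProfile (σ t : ℝ) : ℝ := σ * (1 + t) ^ (σ / 2 - 1)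

theorem hasDerivAt_gradProfile (σ : ℝ) {t : ℝ} (ht : 1 + t ≠ 0) :
    HasDerivAt (gradProfile σ) (σ * ((σ / 2 - 1) * (1 + t) ^ (σ / 2 - 1 - 1))) t :=
  (hasDerivAt_one_add_rpow _ ht).const_mul σ

theorem hasGradientAt_one_add_norm_sq_rpow {E : Type*} [NormedAddCommGroup E]
    [InnerProductSpace ℝ E] [CompleteSpace E] (σ : ℝ) (x : E) :
    HasGradientAt (fun y => (1 + ‖y‖ ^ 2) ^ (σ / 2)) (gradProfile σ (‖x‖ ^ 2) • x) x := by
  have hφ : gradProfile σ (‖x‖ ^ 2) = 2 * (σ / 2 * (1 + ‖x‖ ^ 2) ^ (σ / 2 - 1)) := by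
    rw [gradProfile]; ring
  rw [hφ]
  exact hasGradientAt_comp_norm_sq (hasDerivAt_one_add_rpow (σ / 2) (by positivity))

theorem mul_min_one_two_rpow_mul_le_gradProfile {σ r : ℝ} (hσ : 0 ≤ σ) (hr : 0 ≤ r) :
    σ * min 1 (2 ^ (-(σ / 2 - 1))) * (1 + r) ^ (σ - 2) ≤ gradProfile σ (r ^ 2) := by
  rw [gradProfile, mul_assoc, show σ - 2 = 2 * (σ / 2 - 1) by ring]
  gcongr
  exact min_one_two_rpow_mul_le _ hr

theorem min_sub_one_zero_mul_le_gradProfile_add {σ t : ℝ} (hσ : 0 ≤ σ) (ht : 0 ≤ t) :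
    min (σ - 1) 0 * gradProfile σ t
      ≤ gradProfile σ t + 2 * t * (σ * ((σ / 2 - 1) * (1 + t) ^ (σ / 2 - 1 - 1))) := by
  have ha : 0 < (1 + t) ^ (σ / 2 - 1 - 1) := by positivity
  have hsplit : (1 + t) ^ (σ / 2 - 1) = (1 + t) * (1 + t) ^ (σ / 2 - 1 - 1) := by
    rw [Real.rpow_sub_one (by positivity) (σ / 2 - 1), mul_div_cancel₀ _ (by positivity)]
  have key : min (σ - 1) 0 * (1 + t) ≤ 1 + (σ - 1) * t := by
    rcases le_total σ 1 with h | h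
    · rw [min_eq_left (by linarith)]; nlinarith
    · rw [min_eq_right (by linarith)]; nlinarith
  rw [gradProfile, hsplit]
  have := mul_le_mul_of_nonneg_left key (mul_nonneg hσ ha.le)
  linarith

theorem min_mul_gradProfile_le {Q σ t : ℝ} (hQ : 2 ≤ Q) (hσ : 0 ≤ σ) (ht : 0 ≤ t) :
    min σ 1 * gradProfile σ t
      ≤ (Q - 1) * gradProfile σ t
        + (gradProfile σ t + 2 * t * (σ * ((σ / 2 - 1) * (1 + t) ^ (σ / 2 - 1 - 1))))
          / (1 + t * gradProfile σ t ^ 2) := by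
  have hφ : 0 ≤ gradProfile σ t := by rw [gradProfile]; positivity
  have hmin : min σ 1 = 1 + min (σ - 1) 0 := by
    rw [← min_add_add_left]; norm_num
  have hcurv := mul_le_div_one_add (min_le_right _ _) hφ
    (min_sub_one_zero_mul_le_gradProfile_add hσ ht) (by positivity : 0 ≤ t * gradProfile σ t ^ 2)
  rw [hmin]
  nlinarith

/-- For `u(x) = (1+|x|²)^{σ/2}` on `ℝ^Q`, `Q ≥ 2`, `σ > 0`, there is `C > 0` with
`div(∇u/√(1+|∇u|²)) ≥ C(1+|x|)^{σ−2}/√(1+|∇u|²)` everywhere. -/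
theorem statement13 (Q : ℕ) (hQ : 2 ≤ Q) (σ : ℝ) (hσ : 0 < σ) :
    ∃ C : ℝ, 0 < C ∧ ∀ x : EuclideanSpace ℝ (Fin Q),
      C * (1 + ‖x‖) ^ (σ - 2) /
        Real.sqrt (1 + ‖gradient
          (fun y : EuclideanSpace ℝ (Fin Q) => (1 + ‖y‖ ^ 2) ^ (σ / 2)) x‖ ^ 2)
      ≤ divg (fun y : EuclideanSpace ℝ (Fin Q) =>
          (Real.sqrt (1 + ‖gradient
            (fun z : EuclideanSpace ℝ (Fin Q) => (1 + ‖z‖ ^ 2) ^ (σ / 2)) y‖ ^ 2))⁻¹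
          • gradient (fun z : EuclideanSpace ℝ (Fin Q) => (1 + ‖z‖ ^ 2) ^ (σ / 2)) y) x := by
  have hgrad : gradient (fun y : EuclideanSpace ℝ (Fin Q) => (1 + ‖y‖ ^ 2) ^ (σ / 2))
      = fun y => gradProfile σ (‖y‖ ^ 2) • y :=
    funext fun y => (hasGradientAt_one_add_norm_sq_rpow σ y).gradient
  refine ⟨min σ 1 * (σ * min 1 (2 ^ (-(σ / 2 - 1)))), by positivity, fun x => ?_⟩
  simp only [hgrad, norm_smul_sq]
  rw [divg_inv_sqrt_smul_radial (hasDerivAt_gradProfile σ (by positivity))]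
  gcongr ?_ / _
  calc min σ 1 * (σ * min 1 (2 ^ (-(σ / 2 - 1)))) * (1 + ‖x‖) ^ (σ - 2)
      = min σ 1 * (σ * min 1 (2 ^ (-(σ / 2 - 1))) * (1 + ‖x‖) ^ (σ - 2)) := by ring
    _ ≤ min σ 1 * gradProfile σ (‖x‖ ^ 2) := by
        gcongr
        exact mul_min_one_two_rpow_mul_le_gradProfile hσ.le (norm_nonneg x)
    _ ≤ _ := min_mul_gradProfile_le (by exact_mod_cast hQ) hσ.le (sq_nonneg _)
end
end

section
/- Let μ < 1 and T > 0. Then there exists no twice continuously differentiable function h : [T,∞) → ℝ with h′(t) > 0 for all t ≥ T satisfying the differential inequality 4t·h″(t) / (1 + 4t·h′(t)²) ≥ (1+t)^{(1−μ)/2} · h′(t) for all t ≥ T. -/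
open Set

/-!
Since `(1 + t)^((1 - μ)/2) ≥ 1` for `μ < 1`, the inequality forces `h″ ≥ (h′)³`. For a positive
solution `g` of `g′ ≥ g³` the function `-1/(2g²) - t` is nondecreasing, so
`t - T ≤ 1/(2 g(T)²)` for every `t ≥ T`: `h′` blows up in finite time.
-/

lemma pow_three_le_of_mul_le_div {c t g G : ℝ} (hc : 1 ≤ c) (ht : 0 < t) (hg : 0 < g)
    (h : c * g ≤ 4 * t * G / (1 + 4 * t * g ^ 2)) : g ^ 3 ≤ G := by
  have hD : 0 < 1 + 4 * t * g ^ 2 := by positivity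
  rw [le_div_iff₀ hD] at h
  nlinarith [mul_le_mul_of_nonneg_right hc (mul_pos hg hD).le]

lemma HasDerivWithinAt.neg_inv_sq_div_two_sub_id {g : ℝ → ℝ} {G t : ℝ} {s : Set ℝ}
    (hd : HasDerivWithinAt g G s t) (hg : g t ≠ 0) :
    HasDerivWithinAt (fun x => -(g x ^ 2)⁻¹ / 2 - x) (G / g t ^ 3 - 1) s t := by
  refine ((((hd.fun_pow 2).fun_inv (pow_ne_zero 2 hg)).fun_neg.div_const 2).fun_sub
    (hasDerivWithinAt_id t s)).congr_deriv ?_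
  field_simp
  ring

section CubicBlowUp

variable {T : ℝ} {g G : ℝ → ℝ}

lemma monotoneOn_neg_inv_sq_div_two_sub_id_of_pow_three_le
    (hd : ∀ t ∈ Ici T, HasDerivWithinAt g (G t) (Ici T) t)
    (hpos : ∀ t ∈ Ici T, 0 < g t) (hcube : ∀ t ∈ Ici T, g t ^ 3 ≤ G t) :
    MonotoneOn (fun x => -(g x ^ 2)⁻¹ / 2 - x) (Ici T) := by
  have hψ (t : ℝ) (ht : t ∈ Ici T) := (hd t ht).neg_inv_sq_div_two_sub_id (hpos t ht).ne'
  refine monotoneOn_of_hasDerivWithinAt_nonneg (convex_Ici T) (f' := fun t => G t / g t ^ 3 - 1)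
    (fun t ht => (hψ t ht).continuousWithinAt) (fun t ht => ?_) (fun t ht => ?_) <;>
    rw [interior_Ici] at *
  · exact (hψ t (Ioi_subset_Ici_self ht)).mono Ioi_subset_Ici_self
  · rw [sub_nonneg, one_le_div₀ (pow_pos (hpos t (Ioi_subset_Ici_self ht)) 3)]
    exact hcube t (Ioi_subset_Ici_self ht)

lemma sub_le_inv_sq_div_two_of_pow_three_le
    (hd : ∀ t ∈ Ici T, HasDerivWithinAt g (G t) (Ici T) t)
    (hpos : ∀ t ∈ Ici T, 0 < g t) (hcube : ∀ t ∈ Ici T, g t ^ 3 ≤ G t) {t : ℝ} (ht : T ≤ t) :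
    t - T ≤ (g T ^ 2)⁻¹ / 2 := by
  have hmono := monotoneOn_neg_inv_sq_div_two_sub_id_of_pow_three_le hd hpos hcube
    self_mem_Ici (mem_Ici.mpr ht) ht
  have : 0 < (g t ^ 2)⁻¹ := by have := hpos t ht; positivity
  linarith

end CubicBlowUp

/-- The ordinary differential inequality `4t·h″/(1+4t·(h′)²) ≥ (1+t)^{(1−μ)/2} h′`,
arising from the radialization of the mean curvature operator, has no increasing
`C²` solutions on a half-line `[T,∞)` when `μ < 1`. -/
theorem statement18 (μ T : ℝ) (hμ : μ < 1) (hT : 0 < T) :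
    ¬ ∃ h h' h'' : ℝ → ℝ,
      (∀ t ∈ Ici T, HasDerivWithinAt h (h' t) (Ici T) t) ∧
      (∀ t ∈ Ici T, HasDerivWithinAt h' (h'' t) (Ici T) t) ∧
      ContinuousOn h'' (Ici T) ∧
      (∀ t ∈ Ici T, 0 < h' t) ∧
      (∀ t ∈ Ici T, (1 + t) ^ ((1 - μ) / 2) * h' t ≤
        4 * t * h'' t / (1 + 4 * t * (h' t) ^ 2)) := by
  rintro ⟨-, g, G, -, hd, -, hpos, hineq⟩
  have hcube (t : ℝ) (ht : t ∈ Ici T) : g t ^ 3 ≤ G t :=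
    pow_three_le_of_mul_le_div (Real.one_le_rpow (by linarith [mem_Ici.mp ht]) (by linarith))
      (hT.trans_le ht) (hpos t ht) (hineq t ht)
  have hT' : T ≤ T + (g T ^ 2)⁻¹ / 2 + 1 := by
    have : 0 < g T := hpos T self_mem_Ici
    linarith [show 0 ≤ (g T ^ 2)⁻¹ / 2 by positivity]
  linarith [sub_le_inv_sq_div_two_of_pow_three_le hd hpos hcube hT']
end
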